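/- The intersection of K₊ and K₋ is exactly the singleton {0}: K₊ ∩ K₋ = {0}. -/

import Mathlib

/-!
A compact solution of `C = T₋₁ '' C ∪ T₀ '' C ∪ T₁ '' C` lies in `[-1, 1]`: at a point of `C`
of maximal modulus `m` we get `m ≤ 99/100 + m/100`. Hence `C₁ ∪ C₋₁` lies in `0.98 ≤ |x| ≤ 1`,
so every nonzero point of `K₊` has modulus in `[0.98, 1] · 100ᵏ` and every nonzero point of `K₋`
in `[0.098, 0.1] · 100ˡ` for some integers `k`, `l`. These two families of intervals are disjoint.
-/


noncomputable section

/-- The affine contraction of ratio 1/100 fixing 0. -/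
def T0 (x : ℝ) : ℝ := x / 100

/-- The affine contraction of ratio 1/100 fixing 1. -/
def T1 (x : ℝ) : ℝ := 1 + (x - 1) / 100

/-- The affine contraction of ratio 1/100 fixing -1. -/
def Tm1 (x : ℝ) : ℝ := -1 + (x + 1) / 100

/-- The inverse of `T0`. -/
def T0inv (x : ℝ) : ℝ := 100 * x

/-- The `i`-th iterate of `T0` for `i ≥ 0`, and the `|i|`-th iterate of
`T0⁻¹ : x ↦ 100 x` for `i < 0`. -/
def T0z : ℤ → ℝ → ℝ
  | Int.ofNat n => T0^[n]
  | Int.negSucc n => T0inv^[n + 1]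

/-- The set `K₊ = {0} ∪ ⋃ i ∈ ℤ, T₀^[i] '' (C₁ ∪ C₋₁)` where `C₁ = T₁ '' C`,
`C₋₁ = T₋₁ '' C`. -/
def Kplus (C : Set ℝ) : Set ℝ := {0} ∪ ⋃ i : ℤ, T0z i '' (T1 '' C ∪ Tm1 '' C)

/-- The map `Q : x ↦ x/10`. -/
def Q (x : ℝ) : ℝ := x / 10

/-- The set `K₋ = Q '' K₊`. -/
def Kminus (C : Set ℝ) : Set ℝ := Q '' Kplus C

/-- The bijection `h` : `x ↦ x/10` for `x ≥ 0`, `x ↦ 10 x` for `x < 0`. -/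
def hmap (x : ℝ) : ℝ := if 0 ≤ x then x / 10 else 10 * x

/-- The inverse of `h` : `y ↦ 10 y` for `y ≥ 0`, `y ↦ y/10` for `y < 0`. -/
def hmapInv (y : ℝ) : ℝ := if 0 ≤ y then 10 * y else y / 10

/-- The inverse of `T₋₁` : `x ↦ 100 x + 99`. -/
def Tm1inv (x : ℝ) : ℝ := 100 * x + 99

lemma T0_iterate_apply (n : ℕ) (x : ℝ) : T0^[n] x = x / 100 ^ n := by
  induction n with
  | zero => simp
  | succ n ih => rw [Function.iterate_succ_apply', ih, T0, pow_succ, div_div]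

lemma T0inv_iterate_apply (n : ℕ) (x : ℝ) : T0inv^[n] x = 100 ^ n * x := by
  induction n with
  | zero => simp
  | succ n ih => rw [Function.iterate_succ_apply', ih, T0inv, pow_succ', mul_assoc]

lemma T0z_apply (i : ℤ) (x : ℝ) : T0z i x = (100 : ℝ) ^ (-i) * x := by
  cases i with
  | ofNat n =>
    show T0^[n] x = _
    rw [T0_iterate_apply, Int.ofNat_eq_natCast, zpow_neg, zpow_natCast, div_eq_inv_mul]
  | negSucc n =>
    show T0inv^[n + 1] x = _
    rw [T0inv_iterate_apply, Int.neg_negSucc, ← zpow_natCast]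

theorem IsCompact.norm_le_div_one_sub {E : Type*} [SeminormedAddCommGroup E] {C : Set E}
    (hC : IsCompact C) {a r : ℝ} (hr₀ : 0 ≤ r) (hr₁ : r < 1)
    (h : ∀ z ∈ C, ∃ y ∈ C, ‖z‖ ≤ a + r * ‖y‖) : ∀ x ∈ C, ‖x‖ ≤ a / (1 - r) := by
  rcases C.eq_empty_or_nonempty with rfl | hne
  · simp
  obtain ⟨z, hz, hmax⟩ := hC.exists_isMaxOn hne continuous_norm.continuousOn
  obtain ⟨y, hy, hzy⟩ := h z hz
  have hyz : ‖y‖ ≤ ‖z‖ := hmax hy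
  have hz_le : ‖z‖ ≤ a / (1 - r) := by
    rw [le_div_iff₀ (by linarith)]
    nlinarith
  exact fun x hx => (hmax hx).trans hz_le

lemma abs_le_one_of_eq_union_image (C : Set ℝ) (hcomp : IsCompact C)
    (hself : C = Tm1 '' C ∪ T0 '' C ∪ T1 '' C) : ∀ x ∈ C, |x| ≤ 1 := by
  have hbound : ∀ z ∈ C, ∃ y ∈ C, ‖z‖ ≤ 99 / 100 + 1 / 100 * ‖y‖ := by
    intro z hz
    rw [hself] at hz
    simp only [Real.norm_eq_abs]
    rcases hz with (⟨y, hy, rfl⟩ | ⟨y, hy, rfl⟩) | ⟨y, hy, rfl⟩ <;> refine ⟨y, hy, ?_⟩ <;>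
      simp only [Tm1, T0, T1, abs_le] <;> constructor <;> linarith [neg_abs_le y, le_abs_self y]
  intro x hx
  have := hcomp.norm_le_div_one_sub (by norm_num) (by norm_num) hbound x hx
  norm_num at this
  exact this

lemma abs_mem_Icc_of_mem_T1_union_Tm1 {C : Set ℝ} (hC : ∀ x ∈ C, |x| ≤ 1) :
    ∀ x ∈ T1 '' C ∪ Tm1 '' C, 98 / 100 ≤ |x| ∧ |x| ≤ 1 := by
  rintro x (⟨y, hy, rfl⟩ | ⟨y, hy, rfl⟩) <;> obtain ⟨hy₁, hy₂⟩ := abs_le.mp (hC y hy)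
  · rw [T1, abs_of_nonneg (by linarith)]
    constructor <;> linarith
  · rw [Tm1, abs_of_nonpos (by linarith)]
    constructor <;> linarith

lemma exists_zpow_bounds_of_mem_Kplus {C : Set ℝ}
    (hD : ∀ x ∈ T1 '' C ∪ Tm1 '' C, 98 / 100 ≤ |x| ∧ |x| ≤ 1) {a : ℝ} (ha : a ∈ Kplus C)
    (ha₀ : a ≠ 0) : ∃ k : ℤ, 98 / 100 * (100 : ℝ) ^ k ≤ |a| ∧ |a| ≤ (100 : ℝ) ^ k := by
  obtain ⟨i, x, hx, rfl⟩ := Set.mem_iUnion.mp (ha.resolve_left ha₀)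
  have hpos : (0 : ℝ) < 100 ^ (-i) := zpow_pos (by norm_num) _
  obtain ⟨hx₁, hx₂⟩ := hD x hx
  refine ⟨-i, ?_, ?_⟩ <;> rw [T0z_apply, abs_mul, abs_of_pos hpos] <;> nlinarith

-- `k < l` from `h₁, h₄`, and then `h₂, h₃` would need `100 ≤ 1000 / 98`.
lemma zpow_bounds_disjoint {k l : ℤ} {t : ℝ} (h₁ : 98 / 100 * (100 : ℝ) ^ k ≤ t)
    (h₂ : t ≤ (100 : ℝ) ^ k) (h₃ : 98 / 100 * (100 : ℝ) ^ l / 10 ≤ t)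
    (h₄ : t ≤ (100 : ℝ) ^ l / 10) : False := by
  have hk : (0 : ℝ) < 100 ^ k := zpow_pos (by norm_num) _
  have hkl : k < l := by
    rw [← zpow_lt_zpow_iff_right₀ (by norm_num : (1 : ℝ) < 100)]
    linarith
  have hle : (100 : ℝ) ^ (k + 1) ≤ 100 ^ l := zpow_le_zpow_right₀ (by norm_num) hkl
  rw [zpow_add_one₀ (by norm_num)] at hle
  linarith

theorem stmt_8_general (C : Set ℝ) (hcomp : IsCompact C)
    (hself : C = Tm1 '' C ∪ T0 '' C ∪ T1 '' C) :
    Kplus C ∩ Kminus C = {0} := by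
  have hD := abs_mem_Icc_of_mem_T1_union_Tm1 (abs_le_one_of_eq_union_image C hcomp hself)
  have hzero : (0 : ℝ) ∈ Kplus C := Or.inl rfl
  refine Set.Subset.antisymm ?_ (Set.singleton_subset_iff.mpr ⟨hzero, 0, hzero, by simp [Q]⟩)
  rintro _ ⟨ha, b, hb, rfl⟩
  by_contra hQb
  have hb₀ : b ≠ 0 := fun h => hQb (by simp [h, Q])
  obtain ⟨k, hk₁, hk₂⟩ := exists_zpow_bounds_of_mem_Kplus hD ha hQb
  obtain ⟨l, hl₁, hl₂⟩ := exists_zpow_bounds_of_mem_Kplus hD hb hb₀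
  have habs : |Q b| = |b| / 10 := by rw [Q, abs_div, abs_of_pos (by norm_num : (0 : ℝ) < 10)]
  exact zpow_bounds_disjoint (l := l) hk₁ hk₂ (by rw [habs]; linarith) (by rw [habs]; linarith)

theorem stmt_8 (C : Set ℝ) (hne : C.Nonempty) (hcomp : IsCompact C)
    (hself : C = Tm1 '' C ∪ T0 '' C ∪ T1 '' C) :
    Kplus C ∩ Kminus C = {0} :=
  stmt_8_general C hcomp hself
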